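/- arXiv:0707.0676 — 3 statements merged into one kernel-verified Lean document; each statement's English description precedes it below -/
import Mathlib

section
/- In the Euclidean plane, at most 6 closed unit discs with pairwise disjoint interiors can all be tangent to a fixed closed unit disc. Equivalently: there do not exist 7 points p₁, ..., p₇ ∈ ℝ² with ‖pᵢ‖ = 2 for all i and ‖pᵢ − pⱼ‖ ≥ 2 for all i ≠ j. -/
/-!
View the points as complex numbers of modulus 2. The negatives of their arguments lie in
`[-π, π)`, which is the union of six half-open arcs of length `π / 3`, so two of them fall into
the same arc. By the law of cosines, two points of modulus `r` whose arguments differ by less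
than `π / 3` are at distance less than `r`.
-/

open Real Complex ComplexConjugate

theorem exists_ne_abs_sub_lt_of_card_gt {ι : Type*} [Fintype ι] {n : ℕ}
    (hn : n < Fintype.card ι) {f : ι → ℝ} {a δ : ℝ} (hδ : 0 < δ)
    (hf : ∀ i, f i ∈ Set.Ico a (a + n * δ)) :
    ∃ i j, i ≠ j ∧ |f i - f j| < δ := by
  have hbin : ∀ i ∈ Finset.univ, ⌊(f i - a) / δ⌋ ∈ Finset.Ico (0 : ℤ) n := by
    intro i _
    obtain ⟨hlo, hhi⟩ := hf i
    rw [Finset.mem_Ico, Int.floor_nonneg, Int.floor_lt, le_div_iff₀ hδ, div_lt_iff₀ hδ]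
    push_cast
    constructor <;> linarith
  obtain ⟨i, -, j, -, hij, hfloor⟩ :=
    Finset.exists_ne_map_eq_of_card_lt_of_maps_to (by simpa using hn) hbin
  refine ⟨i, j, hij, ?_⟩
  have hclose := Int.abs_sub_lt_one_of_floor_eq_floor hfloor
  rwa [← sub_div, sub_sub_sub_cancel_right, abs_div, abs_of_pos hδ, div_lt_one hδ] at hclose

namespace Complex

theorem re_mul_conj_eq_norm_mul_norm_mul_cos_arg_sub (z w : ℂ) :
    (z * conj w).re = ‖z‖ * ‖w‖ * Real.cos (arg z - arg w) := by
  rw [mul_re, conj_re, conj_im, Real.cos_sub, ← norm_mul_cos_arg z, ← norm_mul_sin_arg z,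
    ← norm_mul_cos_arg w, ← norm_mul_sin_arg w]
  ring

theorem norm_sub_lt_of_abs_arg_sub_lt {z w : ℂ} {r : ℝ} (hr : 0 < r) (hz : ‖z‖ = r)
    (hw : ‖w‖ = r) (harg : |arg z - arg w| < π / 3) : ‖z - w‖ < r := by
  have hcos : 1 / 2 < Real.cos (arg z - arg w) := by
    rw [← Real.cos_abs, ← Real.cos_pi_div_three]
    exact Real.cos_lt_cos_of_nonneg_of_le_pi (abs_nonneg _) (by linarith [pi_pos]) harg
  have hsq : ‖z - w‖ ^ 2 < r ^ 2 := by
    rw [← normSq_eq_norm_sq, normSq_sub, normSq_eq_norm_sq, normSq_eq_norm_sq,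
      re_mul_conj_eq_norm_mul_norm_mul_cos_arg_sub, hz, hw]
    nlinarith [mul_pos (mul_pos hr hr) (sub_pos.2 hcos)]
  exact lt_of_pow_lt_pow_left₀ 2 hr.le hsq

theorem exists_ne_norm_sub_lt_of_six_lt_card {ι : Type*} [Fintype ι]
    (hcard : 6 < Fintype.card ι) {z : ι → ℂ} {r : ℝ} (hr : 0 < r) (hz : ∀ i, ‖z i‖ = r) :
    ∃ i j, i ≠ j ∧ ‖z i - z j‖ < r := by
  have harg : ∀ i, -arg (z i) ∈ Set.Ico (-π) (-π + (6 : ℕ) * (π / 3)) := fun i =>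
    ⟨by linarith [arg_le_pi (z i)], by push_cast; linarith [neg_pi_lt_arg (z i)]⟩
  obtain ⟨i, j, hij, hclose⟩ := exists_ne_abs_sub_lt_of_card_gt hcard (by positivity) harg
  refine ⟨j, i, hij.symm, norm_sub_lt_of_abs_arg_sub_lt hr (hz j) (hz i) ?_⟩
  rwa [neg_sub_neg] at hclose

end Complex

theorem kissing_number_two_dim :
    ¬ ∃ p : Fin 7 → EuclideanSpace ℝ (Fin 2),
      (∀ i, ‖p i‖ = 2) ∧ ∀ i j, i ≠ j → 2 ≤ ‖p i - p j‖ := by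
  rintro ⟨p, hnorm, hdist⟩
  let e := Complex.orthonormalBasisOneI.repr
  obtain ⟨i, j, hij, hlt⟩ := Complex.exists_ne_norm_sub_lt_of_six_lt_card
    (z := fun i => e.symm (p i)) (by simp) two_pos (fun i => by simp [hnorm])
  rw [← map_sub, LinearIsometryEquiv.norm_map] at hlt
  exact (hdist i j hij).not_gt hlt
end

section
/- For a > 0, the sequence k ↦ arctan(ka) − arctan((k−1)a), defined for integers k ≥ 1, is strictly decreasing. -/
open Real Set

theorem hasDerivAt_arctan_add_sub_arctan (d x : ℝ) :
    HasDerivAt (fun x => arctan (x + d) - arctan x)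
      (1 / (1 + (x + d) ^ 2) - 1 / (1 + x ^ 2)) x :=
  (((hasDerivAt_id' x).add_const d).arctan.sub (hasDerivAt_id' x).arctan).congr_deriv (by ring)

-- The gap function is symmetric about `-d / 2`, so no larger half-line works.
theorem strictAntiOn_arctan_add_sub_arctan {d : ℝ} (hd : 0 < d) :
    StrictAntiOn (fun x => arctan (x + d) - arctan x) (Ici (-d / 2)) := by
  refine strictAntiOn_of_deriv_neg (convex_Ici _) (by fun_prop) fun x hx => ?_
  rw [interior_Ici, mem_Ioi] at hx
  rw [(hasDerivAt_arctan_add_sub_arctan d x).deriv, sub_neg]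
  have hsq : x ^ 2 < (x + d) ^ 2 := by nlinarith
  gcongr

theorem arctan_diff_strict_anti (a : ℝ) (ha : 0 < a) (k l : ℕ)
    (hk : 1 ≤ k) (hkl : k < l) :
    arctan (l * a) - arctan ((l - 1 : ℕ) * a) <
      arctan (k * a) - arctan ((k - 1 : ℕ) * a) := by
  have natCast_mul_eq_pred_mul_add {n : ℕ} (hn : 1 ≤ n) : (n : ℝ) * a = ((n - 1 : ℕ) : ℝ) * a + a := by
    rw [Nat.cast_sub hn]; ring
  have hmem {n : ℕ} : ((n - 1 : ℕ) : ℝ) * a ∈ Ici (-a / 2) := by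
    rw [mem_Ici]; nlinarith [(Nat.cast_nonneg (n - 1) : (0 : ℝ) ≤ _)]
  have hlt : ((k - 1 : ℕ) : ℝ) * a < ((l - 1 : ℕ) : ℝ) * a := by gcongr
  rw [natCast_mul_eq_pred_mul_add hk, natCast_mul_eq_pred_mul_add (hk.trans hkl.le)]
  exact strictAntiOn_arctan_add_sub_arctan ha hmem hmem hlt
end

section
/- Let θ_17 = arctan(17·tan(π/6)/30) − arctan(16·tan(π/6)/30). Then |θ_17 − π/180| < 0.002·(π/180); i.e., the 17th angle of the paper's construction differs from 1 degree by a relative error of less than 0.2%. -/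
open Real

/-!
Since `tan (π / 6) = 1 / √3`, the subtraction formula for `arctan` gives
`θ₁₇ = arctan x` with `x = 15√3 / 1486 ≈ 0.0174837`. For `x > 0` one has
`x / (1 + x²) < arctan x < x`, and both bounds lie within `0.2%` of `π / 180 ≈ 0.0174533`.
-/

namespace Real

theorem arctan_sub_arctan {x y : ℝ} (h : -1 < x * y) :
    arctan x - arctan y = arctan ((x - y) / (1 + x * y)) := by
  have := arctan_add (x := x) (y := -y) (by linarith)
  rw [arctan_neg] at this
  rw [sub_eq_add_neg, this]
  ring_nf

theorem arctan_lt_self {x : ℝ} (hx : 0 < x) : arctan x < x := by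
  simpa only [tan_arctan] using lt_tan (arctan_pos.2 hx) (arctan_lt_pi_div_two x)

-- `x / (1 + x²) = sin (arctan x) * cos (arctan x) = sin (2 arctan x) / 2`.
theorem div_one_add_sq_lt_arctan {x : ℝ} (hx : 0 < x) : x / (1 + x ^ 2) < arctan x := by
  have hsin_cos : sin (arctan x) * cos (arctan x) = x / (1 + x ^ 2) := by
    rw [sin_arctan, cos_arctan, div_mul_div_comm, mul_one, mul_self_sqrt (by positivity)]
  have := sin_lt (mul_pos two_pos (arctan_pos.2 hx))
  rw [sin_two_mul] at this
  linarith

end Real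

theorem arctan_seventeen_sub_arctan_sixteen :
    arctan (17 * tan (π / 6) / 30) - arctan (16 * tan (π / 6) / 30) = arctan (15 * √3 / 1486) := by
  have hsqrt : √3 ^ 2 = 3 := sq_sqrt (by norm_num)
  have hprod : -1 < 17 * (1 / √3) / 30 * (16 * (1 / √3) / 30) :=
    neg_one_lt_zero.trans_le (by positivity)
  rw [tan_pi_div_six, arctan_sub_arctan hprod]
  congr 1
  field_simp
  rw [hsqrt]
  norm_num

theorem theta_seventeen_close_to_one_degree :
    |(arctan (17 * tan (π / 6) / 30) - arctan (16 * tan (π / 6) / 30)) - π / 180| <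
      0.002 * (π / 180) := by
  set x : ℝ := 15 * √3 / 1486 with hx
  have hsqrt : √3 ^ 2 = 3 := sq_sqrt (by norm_num)
  have hsqrt_lb : (1.7320508 : ℝ) < √3 := by nlinarith [sqrt_nonneg 3]
  have hsqrt_ub : √3 < 1.7320509 := by nlinarith [sqrt_nonneg 3]
  have hx_pos : 0 < x := by positivity
  have hx_ub : x < 1.002 * (π / 180) := by linarith [pi_gt_d6]
  have hx_lb : 0.998 * (π / 180) < x / (1 + x ^ 2) := by
    rw [lt_div_iff₀ (by positivity)]
    nlinarith [pi_lt_d6]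
  rw [arctan_seventeen_sub_arctan_sixteen, abs_sub_lt_iff]
  constructor
  · linarith [arctan_lt_self hx_pos]
  · linarith [div_one_add_sq_lt_arctan hx_pos]
end
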